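/- Let G be a connected graph of order n ≥ 2 and H a family of n connected non-trivial graphs. Then every H_i ∈ H has the property that all of its vertices are twin vertices if and only if dim_2(G⊙H) = Σ_{i=1}^n |V(H_i)|. -/

import Mathlib

open SimpleGraph

/-- `S` is a `k`-metric generator for `G`: every pair of distinct vertices is
distinguished (has different distances) by at least `k` vertices of `S`. -/
def kMetricGen {V : Type*} [Fintype V] (G : SimpleGraph V) (k : ℕ) (S : Set V) : Prop :=
  ∀ u v : V, u ≠ v → ∃ T : Finset V, ↑T ⊆ S ∧ k ≤ T.card ∧ ∀ w ∈ T, G.dist u w ≠ G.dist v w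

/-- `G` is `k`-metric dimensional: `k` is the largest integer admitting a `k`-metric generator. -/
def kMetricDimensional {V : Type*} [Fintype V] (G : SimpleGraph V) (k : ℕ) : Prop :=
  (∃ S : Set V, kMetricGen G k S) ∧ ∀ k' : ℕ, (∃ S : Set V, kMetricGen G k' S) → k' ≤ k

/-- The `k`-metric dimension of `G`. -/
noncomputable def kMetricDim {V : Type*} [Fintype V] (G : SimpleGraph V) (k : ℕ) : ℕ :=
  sInf {m | ∃ S : Finset V, kMetricGen G k ↑S ∧ S.card = m}

/-- A `k`-metric basis: a minimum-cardinality `k`-metric generator. -/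
def kMetricBasis {V : Type*} [Fintype V] (G : SimpleGraph V) (k : ℕ) (B : Finset V) : Prop :=
  kMetricGen G k ↑B ∧ ∀ T : Finset V, kMetricGen G k ↑T → B.card ≤ T.card

/-- Auxiliary relation for the corona product. -/
def coronaRel {V : Type*} {W : V → Type*} (G : SimpleGraph V) (H : ∀ v, SimpleGraph (W v)) :
    (V ⊕ (Σ v, W v)) → (V ⊕ (Σ v, W v)) → Prop
  | Sum.inl a, Sum.inl b => G.Adj a b
  | Sum.inl a, Sum.inr b => a = b.1
  | Sum.inr a, Sum.inr b => ∃ h : a.1 = b.1, (H b.1).Adj (h ▸ a.2) b.2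
  | _, _ => False

/-- The corona product `G ⊙ 𝓗`: one copy of `G`, and each vertex `v` of `G` joined by an
edge to every vertex of its own copy of `H v`. -/
def corona {V : Type*} {W : V → Type*} (G : SimpleGraph V) (H : ∀ v, SimpleGraph (W v)) :
    SimpleGraph (V ⊕ (Σ v, W v)) :=
  SimpleGraph.fromRel (coronaRel G H)

/-- The join `K₁ + H`: a new vertex (`none`) adjacent to every vertex of `H`. -/
def K1join {U : Type*} (H : SimpleGraph U) : SimpleGraph (Option U) :=
  SimpleGraph.fromRel (fun x y => match x, y with
    | none, some _ => True
    | some a, some b => H.Adj a b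
    | _, _ => False)

/-- `𝒞(H) = min_{x ≠ y} |(N(x) △ N(y)) ∪ {x,y}|`. -/
noncomputable def CC {U : Type*} (H : SimpleGraph U) : ℕ :=
  sInf {m | ∃ x y : U, x ≠ y ∧
    (symmDiff (H.neighborSet x) (H.neighborSet y) ∪ {x, y}).ncard = m}

/-!
Distances in `G ⊙ 𝓗` are explicit: two vertices of the same copy `H v` are at distance 1 or 2
according to their adjacency in `H v`; any other two vertices are at the `G`-distance of their
roots plus the number of them that lie in copies. Hence a twin pair `x, y` of `H v` is
distinguished only by `x` and `y`, so every 2-metric generator contains every vertex that has a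
twin. Conversely the vertices of all copies form a 2-metric generator, and every pair other than a
twin pair is distinguished by at least three of them, so a vertex without a twin can be dropped.
-/

open Finset

namespace SimpleGraph

variable {α β : Type*} {G : SimpleGraph α} {u v : α}

theorem Walk.le_add_length {f : α → ℕ} (hf : ∀ ⦃a b⦄, G.Adj a b → f b ≤ f a + 1)
    (p : G.Walk u v) : f v ≤ f u + p.length := by
  induction p with
  | nil => simp
  | cons h _ ih =>
    have := hf h
    rw [Walk.length_cons]
    omega

theorem Reachable.le_add_dist {f : α → ℕ} (hf : ∀ ⦃a b⦄, G.Adj a b → f b ≤ f a + 1)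
    (h : G.Reachable u v) : f v ≤ f u + G.dist u v := by
  obtain ⟨p, hp⟩ := h.exists_walk_length_eq_dist
  exact hp ▸ p.le_add_length hf

theorem Reachable.dist_map_le {G' : SimpleGraph β} (φ : G →g G') (h : G.Reachable u v) :
    G'.dist (φ u) (φ v) ≤ G.dist u v := by
  obtain ⟨p, hp⟩ := h.exists_walk_length_eq_dist
  exact (dist_le (p.map φ)).trans_eq ((Walk.length_map ..).trans hp)

def IsTwin (G : SimpleGraph α) (x y : α) : Prop :=
  G.neighborSet x = G.neighborSet y ∨ insert x (G.neighborSet x) = insert y (G.neighborSet y)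

theorem IsTwin.symm {x y : α} (h : G.IsTwin x y) : G.IsTwin y x :=
  h.imp Eq.symm Eq.symm

theorem isTwin_iff_forall_adj_iff {x y : α} :
    G.IsTwin x y ↔ ∀ z, z ≠ x → z ≠ y → (G.Adj x z ↔ G.Adj y z) := by
  refine ⟨?_, fun h => ?_⟩
  · rintro (h | h) z hzx hzy
    · simpa only [mem_neighborSet] using Set.ext_iff.1 h z
    · simpa only [Set.mem_insert_iff, mem_neighborSet, hzx, hzy, false_or] using Set.ext_iff.1 h z
  · by_cases hxy : G.Adj x y
    · refine Or.inr (Set.ext fun z => ?_)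
      by_cases hzx : z = x
      · subst hzx; simp [hxy.symm]
      by_cases hzy : z = y
      · subst hzy; simp [hxy]
      simpa [hzx, hzy] using h z hzx hzy
    · refine Or.inl (Set.ext fun z => ?_)
      by_cases hzx : z = x
      · subst hzx; simpa using fun h => hxy h.symm
      by_cases hzy : z = y
      · subst hzy; simpa using hxy
      simpa using h z hzx hzy

end SimpleGraph

section MetricGenerators

variable {α : Type*} [Fintype α] {G : SimpleGraph α} {k : ℕ}

theorem kMetricGen_iff_le_card_filter (S : Finset α) :
    kMetricGen G k ↑S ↔ ∀ u v, u ≠ v → k ≤ #{w ∈ S | G.dist u w ≠ G.dist v w} := by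
  refine forall₂_congr fun u v => imp_congr_right fun _ => ⟨?_, fun h => ⟨_, ?_, h, ?_⟩⟩
  · rintro ⟨T, hTS, hk, hT⟩
    exact hk.trans (card_le_card fun w hw => mem_filter.2 ⟨hTS hw, hT w hw⟩)
  · exact coe_subset.2 (filter_subset _ _)
  · simp only [mem_filter]
    exact fun w hw => hw.2

theorem two_le_card_filter_dist_ne (hG : G.Connected) {S : Finset α} {u v : α} (hu : u ∈ S)
    (hv : v ∈ S) (huv : u ≠ v) : 2 ≤ #{w ∈ S | G.dist u w ≠ G.dist v w} := by
  classical
  rw [← card_pair huv]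
  refine card_le_card fun w hw => ?_
  rcases mem_insert.1 hw with rfl | hw
  · simpa [hu] using (hG.pos_dist_of_ne huv.symm).ne
  · rw [mem_singleton.1 hw]
    simpa [hv] using (hG.pos_dist_of_ne huv).ne'

theorem mem_of_kMetricGen_two {S : Set α} (hS : kMetricGen G 2 S) {u v : α} (huv : u ≠ v)
    (h : ∀ w, w ≠ u → w ≠ v → G.dist u w = G.dist v w) : u ∈ S := by
  classical
  obtain ⟨T, hTS, hT2, hT⟩ := hS u v huv
  have hTuv : T ⊆ {u, v} := fun w hw => by
    by_contra hw'
    simp only [mem_insert, mem_singleton, not_or] at hw'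
    exact hT w hw (h w hw'.1 hw'.2)
  have : T = {u, v} := eq_of_subset_of_card_le hTuv (by rwa [card_pair huv])
  exact hTS (by simp [this])

theorem kMetricDim_le_card {S : Finset α} (hS : kMetricGen G k ↑S) : kMetricDim G k ≤ #S :=
  Nat.sInf_le ⟨S, hS, rfl⟩

theorem kMetricDim_eq_card_of_forall_subset {B : Finset α} (hB : kMetricGen G k ↑B)
    (h : ∀ S : Finset α, kMetricGen G k ↑S → B ⊆ S) : kMetricDim G k = #B :=
  (kMetricDim_le_card hB).antisymm <| le_csInf ⟨_, B, hB, rfl⟩ <| by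
    rintro _ ⟨S, hS, rfl⟩
    exact card_le_card (h S hS)

end MetricGenerators

section Corona

variable {V : Type*} {W : V → Type*} {G : SimpleGraph V} {H : ∀ v, SimpleGraph (W v)}

def coronaRoot : V ⊕ (Σ v, W v) → V := Sum.elim id Sigma.fst

def coronaDepth : V ⊕ (Σ v, W v) → ℕ := Sum.elim (fun _ => 0) (fun _ => 1)

def InSameCopy : V ⊕ (Σ v, W v) → V ⊕ (Σ v, W v) → Prop
  | .inr p, .inr q => p.1 = q.1
  | _, _ => False

@[simp]
theorem corona_adj_inl_inl {a b : V} : (corona G H).Adj (.inl a) (.inl b) ↔ G.Adj a b := by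
  simp only [corona, fromRel_adj, coronaRel, ne_eq, Sum.inl.injEq]
  exact ⟨fun h => h.2.elim id .symm, fun h => ⟨h.ne, .inl h⟩⟩

@[simp]
theorem corona_adj_inl_inr {a : V} {p : Σ v, W v} :
    (corona G H).Adj (.inl a) (.inr p) ↔ a = p.1 := by
  simp [corona, coronaRel]

@[simp]
theorem corona_adj_inr_inl {a : V} {p : Σ v, W v} :
    (corona G H).Adj (.inr p) (.inl a) ↔ a = p.1 := by
  rw [adj_comm, corona_adj_inl_inr]

@[simp]
theorem corona_adj_inr_inr {a b : V} {x : W a} {y : W b} :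
    (corona G H).Adj (.inr ⟨a, x⟩) (.inr ⟨b, y⟩) ↔ ∃ h : a = b, (H b).Adj (h ▸ x) y := by
  simp only [corona, fromRel_adj, coronaRel]
  constructor
  · rintro ⟨-, ⟨rfl, h⟩ | ⟨rfl, h⟩⟩
    exacts [⟨rfl, h⟩, ⟨rfl, h.symm⟩]
  · rintro ⟨rfl, h⟩
    exact ⟨by simpa using h.ne, .inl ⟨rfl, h⟩⟩

variable (H) in
def coronaInl : G →g corona G H := ⟨Sum.inl, corona_adj_inl_inl.2⟩

theorem corona_dist_coronaRoot_le (u : V ⊕ (Σ v, W v)) :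
    (corona G H).dist u (.inl (coronaRoot u)) ≤ coronaDepth u := by
  rcases u with a | p
  · simp [coronaRoot, coronaDepth]
  · exact (dist_eq_one_iff_adj.2 (corona_adj_inl_inr.2 rfl).symm).le

theorem corona_connected (hG : G.Connected) : (corona G H).Connected := by
  have : Nonempty V := hG.nonempty
  have hroot (u : V ⊕ (Σ v, W v)) : (corona G H).Reachable u (.inl (coronaRoot u)) := by
    rcases u with a | p
    exacts [.rfl, (corona_adj_inl_inr.2 rfl).symm.reachable]
  refine (connected_iff _).2 ⟨fun u w => ?_, ⟨.inl (Classical.arbitrary V)⟩⟩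
  exact ((hroot u).trans ((hG.preconnected _ _).map (coronaInl H))).trans (hroot w).symm

theorem corona_dist_of_not_inSameCopy (hG : G.Connected) {u w : V ⊕ (Σ v, W v)}
    (h : ¬ InSameCopy u w) :
    (corona G H).dist u w =
      coronaDepth u + G.dist (coronaRoot u) (coronaRoot w) + coronaDepth w := by
  classical
  have hC := corona_connected (H := H) hG
  refine le_antisymm ?_ ?_
  · have h₁ := hC.dist_triangle (u := u) (v := .inl (coronaRoot u)) (w := w)
    have h₂ := hC.dist_triangle (u := .inl (coronaRoot u)) (v := .inl (coronaRoot w)) (w := w)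
    have h₃ := corona_dist_coronaRoot_le (G := G) (H := H) u
    have h₄ := (hG.preconnected (coronaRoot u) (coronaRoot w)).dist_map_le (coronaInl H)
    have h₅ := dist_comm.trans_le (corona_dist_coronaRoot_le (G := G) (H := H) w)
    simp only [coronaInl, RelHom.coeFn_mk] at h₄
    omega
  · -- as a function of `w`, the right-hand side grows by at most one along each edge
    let f : V ⊕ (Σ v, W v) → ℕ := fun t => if InSameCopy u t then 0 else
      coronaDepth u + G.dist (coronaRoot u) (coronaRoot t) + coronaDepth t
    have hf : ∀ ⦃t t'⦄, (corona G H).Adj t t' → f t' ≤ f t + 1 := by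
      intro t t' ht
      rcases u with a | ⟨a, x⟩ <;> rcases t with c | ⟨c, z⟩ <;> rcases t' with d | ⟨d, z'⟩ <;>
        simp only [corona_adj_inl_inl, corona_adj_inl_inr, corona_adj_inr_inl,
          corona_adj_inr_inr] at ht
      all_goals first | obtain ⟨rfl, -⟩ := ht | subst ht | skip
      all_goals simp [f, InSameCopy, coronaDepth, coronaRoot]
      all_goals first
        | have := ht.diff_dist_adj (u := a); omega
        | omega
        | split_ifs with hac <;> simp [hac] <;> omega
    have hu : f u = 0 := by rcases u with a | p <;> simp [f, InSameCopy, coronaDepth, coronaRoot]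
    simpa [f, h, hu] using (hC.preconnected u w).le_add_dist hf

theorem corona_dist_inl_inr (hG : G.Connected) (a b : V) (y : W b) :
    (corona G H).dist (.inl a) (.inr ⟨b, y⟩) = G.dist a b + 1 := by
  rw [corona_dist_of_not_inSameCopy hG (by simp [InSameCopy])]
  simp [coronaDepth, coronaRoot]

theorem corona_dist_inr_inr_of_ne (hG : G.Connected) {a b : V} (hab : a ≠ b) (x : W a) (y : W b) :
    (corona G H).dist (.inr ⟨a, x⟩) (.inr ⟨b, y⟩) = G.dist a b + 2 := by
  rw [corona_dist_of_not_inSameCopy hG (by simpa [InSameCopy])]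
  simp only [coronaDepth, coronaRoot, Sum.elim_inr]
  omega

theorem corona_dist_inr_inr_same (hG : G.Connected) {a : V} {x y : W a}
    [Decidable ((H a).Adj x y)] (hxy : x ≠ y) :
    (corona G H).dist (.inr ⟨a, x⟩) (.inr ⟨a, y⟩) = if (H a).Adj x y then 1 else 2 := by
  split_ifs with hadj
  · exact dist_eq_one_iff_adj.2 (by simpa using hadj)
  · have hC := corona_connected (H := H) hG
    have hne : (.inr ⟨a, x⟩ : V ⊕ (Σ v, W v)) ≠ .inr ⟨a, y⟩ := by simpa using hxy
    have h₀ := hC.pos_dist_of_ne hne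
    have h₁ : (corona G H).dist (.inr ⟨a, x⟩) (.inr ⟨a, y⟩) ≠ 1 := by
      simpa [dist_eq_one_iff_adj] using hadj
    have h₂ := hC.dist_triangle (u := .inr ⟨a, x⟩) (v := .inl a) (w := .inr ⟨a, y⟩)
    rw [dist_comm (v := Sum.inl a), corona_dist_inl_inr hG, corona_dist_inl_inr hG, dist_self] at h₂
    omega

theorem corona_dist_eq_of_isTwin (hG : G.Connected) {a : V} {x y : W a} (h : (H a).IsTwin x y)
    {s : V ⊕ (Σ v, W v)} (hsx : s ≠ .inr ⟨a, x⟩) (hsy : s ≠ .inr ⟨a, y⟩) :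
    (corona G H).dist (.inr ⟨a, x⟩) s = (corona G H).dist (.inr ⟨a, y⟩) s := by
  classical
  rcases s with b | ⟨b, z⟩
  · rw [dist_comm (v := Sum.inl b), dist_comm (v := Sum.inl b), corona_dist_inl_inr hG,
      corona_dist_inl_inr hG]
  rcases eq_or_ne a b with rfl | hab
  · have hxz : x ≠ z := by rintro rfl; exact hsx rfl
    have hyz : y ≠ z := by rintro rfl; exact hsy rfl
    simp only [corona_dist_inr_inr_same hG hxz, corona_dist_inr_inr_same hG hyz,
      isTwin_iff_forall_adj_iff.1 h z hxz.symm hyz.symm]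
  · rw [corona_dist_inr_inr_of_ne hG hab, corona_dist_inr_inr_of_ne hG hab]

section Finite

variable [Fintype V] [∀ v, Fintype (W v)]

variable (W) in
def coronaCopies : Finset (V ⊕ (Σ v, W v)) := univ.map .inr

@[simp]
theorem inr_mem_coronaCopies (p : Σ v, W v) : .inr p ∈ coronaCopies W := by
  simp [coronaCopies]

theorem card_coronaCopies : #(coronaCopies W) = ∑ v, Fintype.card (W v) := by
  simp [coronaCopies]

variable [∀ v, Nontrivial (W v)]

theorem corona_two_lt_card_filter_inl_inr [Nontrivial V] (hG : G.Connected) (a b : V) (y : W b) :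
    2 < #{s ∈ coronaCopies W |
      (corona G H).dist (.inl a) s ≠ (corona G H).dist (.inr ⟨b, y⟩) s} := by
  rcases eq_or_ne a b with rfl | hab
  · obtain ⟨c, hc⟩ := exists_ne a
    obtain ⟨z₁, z₂, hz⟩ := exists_pair_ne (W c)
    refine two_lt_card.2 ⟨.inr ⟨a, y⟩, ?_, .inr ⟨c, z₁⟩, ?_, .inr ⟨c, z₂⟩, ?_, ?_, ?_, ?_⟩ <;>
      simp [corona_dist_inl_inr hG, corona_dist_inr_inr_of_ne hG hc.symm, hc.symm, hz]
  · obtain ⟨z₁, z₂, hz⟩ := exists_pair_ne (W a)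
    refine two_lt_card.2 ⟨.inr ⟨a, z₁⟩, ?_, .inr ⟨a, z₂⟩, ?_, .inr ⟨b, y⟩, ?_, ?_, ?_, ?_⟩ <;>
      simp [corona_dist_inl_inr hG, corona_dist_inr_inr_of_ne hG hab.symm, hab, hz]

theorem corona_two_lt_card_filter_dist_ne [Nontrivial V] (hG : G.Connected)
    {u w : V ⊕ (Σ v, W v)} (huw : u ≠ w)
    (h : ∀ a (x y : W a), u = .inr ⟨a, x⟩ → w = .inr ⟨a, y⟩ → ¬ (H a).IsTwin x y) :
    2 < #{s ∈ coronaCopies W | (corona G H).dist u s ≠ (corona G H).dist w s} := by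
  classical
  rcases u with a | ⟨a, x⟩ <;> rcases w with b | ⟨b, y⟩
  · have hab : a ≠ b := by rintro rfl; exact huw rfl
    obtain ⟨z₁, z₂, hz⟩ := exists_pair_ne (W a)
    obtain ⟨z⟩ : Nonempty (W b) := inferInstance
    refine two_lt_card.2 ⟨.inr ⟨a, z₁⟩, ?_, .inr ⟨a, z₂⟩, ?_, .inr ⟨b, z⟩, ?_, ?_, ?_, ?_⟩ <;>
      simp [corona_dist_inl_inr hG, hab, hab.symm, hz, hG.preconnected a b, hG.preconnected b a]
  · exact corona_two_lt_card_filter_inl_inr hG a b y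
  · simpa only [ne_comm] using corona_two_lt_card_filter_inl_inr (H := H) hG b a x
  · rcases eq_or_ne a b with rfl | hab
    · have hxy : x ≠ y := by rintro rfl; exact huw rfl
      obtain ⟨z, hzx, hzy, hz⟩ : ∃ z, z ≠ x ∧ z ≠ y ∧ ¬((H a).Adj x z ↔ (H a).Adj y z) := by
        simpa [isTwin_iff_forall_adj_iff] using h a x y rfl rfl
      refine two_lt_card.2 ⟨.inr ⟨a, x⟩, ?_, .inr ⟨a, y⟩, ?_, .inr ⟨a, z⟩, ?_, ?_, ?_, ?_⟩ <;>
        simp [corona_dist_inr_inr_same hG hxy, corona_dist_inr_inr_same hG hxy.symm,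
          corona_dist_inr_inr_same hG hzx.symm, corona_dist_inr_inr_same hG hzy.symm, hxy,
          hzx.symm, hzy.symm]
      all_goals split_ifs <;> simp_all
    · obtain ⟨z, hz⟩ := exists_ne x
      refine two_lt_card.2 ⟨.inr ⟨a, x⟩, ?_, .inr ⟨a, z⟩, ?_, .inr ⟨b, y⟩, ?_, ?_, ?_, ?_⟩ <;>
        simp [corona_dist_inr_inr_of_ne hG hab, corona_dist_inr_inr_of_ne hG hab.symm,
          corona_dist_inr_inr_same hG hz.symm, hab, hz.symm]
      have := hG.pos_dist_of_ne hab.symm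
      split_ifs <;> omega

theorem kMetricGen_two_coronaCopies [Nontrivial V] (hG : G.Connected) :
    kMetricGen (corona G H) 2 ↑(coronaCopies W) := by
  refine (kMetricGen_iff_le_card_filter _).2 fun u w huw => ?_
  by_cases h : ∃ (a : V) (x y : W a), u = .inr ⟨a, x⟩ ∧ w = .inr ⟨a, y⟩ ∧ (H a).IsTwin x y
  · obtain ⟨a, x, y, rfl, rfl, -⟩ := h
    exact two_le_card_filter_dist_ne (corona_connected hG) (by simp) (by simp) huw
  · push Not at h
    exact (corona_two_lt_card_filter_dist_ne hG huw h).le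

theorem kMetricGen_two_coronaCopies_erase [Nontrivial V] [DecidableEq (V ⊕ (Σ v, W v))]
    (hG : G.Connected) {v : V} {x : W v}
    (hx : ∀ y, y ≠ x → ¬ (H v).IsTwin x y) :
    kMetricGen (corona G H) 2 ↑((coronaCopies W).erase (.inr ⟨v, x⟩)) := by
  refine (kMetricGen_iff_le_card_filter _).2 fun u w huw => ?_
  by_cases h : ∃ (a : V) (y z : W a), u = .inr ⟨a, y⟩ ∧ w = .inr ⟨a, z⟩ ∧ (H a).IsTwin y z
  · obtain ⟨a, y, z, rfl, rfl, hyz⟩ := h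
    have hyz' : y ≠ z := by rintro rfl; exact huw rfl
    have hne {y' z' : W a} (htwin : (H a).IsTwin y' z') (hne : y' ≠ z') :
        (.inr ⟨a, y'⟩ : V ⊕ (Σ v, W v)) ≠ .inr ⟨v, x⟩ := by
      rintro ⟨⟩
      exact hx z' hne.symm htwin
    exact two_le_card_filter_dist_ne (corona_connected hG) (by simpa using hne hyz hyz')
      (by simpa using hne hyz.symm hyz'.symm) huw
  · push Not at h
    rw [filter_erase]
    have := corona_two_lt_card_filter_dist_ne hG huw h
    have := pred_card_le_card_erase (a := (.inr ⟨v, x⟩ : V ⊕ (Σ v, W v)))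
      (s := {s ∈ coronaCopies W | (corona G H).dist u s ≠ (corona G H).dist w s})
    omega

end Finite

end Corona

theorem stmt_16_general {V : Type*} [Fintype V] (hn : 2 ≤ Fintype.card V) {W : V → Type*}
    [∀ v, Fintype (W v)] [∀ v, Nontrivial (W v)] (G : SimpleGraph V) (hG : G.Connected)
    (H : ∀ v, SimpleGraph (W v)) :
    (∀ v, ∀ x : W v, ∃ y : W v, y ≠ x ∧
        ((H v).neighborSet x = (H v).neighborSet y ∨
          insert x ((H v).neighborSet x) = insert y ((H v).neighborSet y))) ↔
      kMetricDim (corona G H) 2 = ∑ v, Fintype.card (W v) := by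
  classical
  have : Nontrivial V := Fintype.one_lt_card_iff_nontrivial.1 hn
  change (∀ v (x : W v), ∃ y, y ≠ x ∧ (H v).IsTwin x y) ↔ _
  rw [← card_coronaCopies]
  constructor
  · intro htwins
    refine kMetricDim_eq_card_of_forall_subset (kMetricGen_two_coronaCopies hG) fun S hS p hp => ?_
    obtain ⟨⟨v, x⟩, -, rfl⟩ := mem_map.1 hp
    obtain ⟨y, hyx, hxy⟩ := htwins v x
    exact mem_of_kMetricGen_two hS (by simpa using hyx.symm)
      fun s hsx hsy => corona_dist_eq_of_isTwin hG hxy hsx hsy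
  · intro hdim
    by_contra! hnot
    obtain ⟨v, x, hx⟩ := hnot
    have hle := kMetricDim_le_card (kMetricGen_two_coronaCopies_erase (H := H) hG hx)
    have hpos := card_pos.2 ⟨_, inr_mem_coronaCopies (W := W) ⟨v, x⟩⟩
    rw [card_erase_of_mem (inr_mem_coronaCopies _)] at hle
    omega

/-- every vertex of every copy `H v` is a twin iff
`dim₂(G ⊙ 𝓗) = Σ |V(H_v)|`. -/
theorem stmt_16 {V : Type*} [Fintype V] (hn : 2 ≤ Fintype.card V) {W : V → Type*}
    [∀ v, Fintype (W v)] [∀ v, Nontrivial (W v)] (G : SimpleGraph V) (hG : G.Connected)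
    (H : ∀ v, SimpleGraph (W v)) (hH : ∀ v, (H v).Connected) :
    (∀ v, ∀ x : W v, ∃ y : W v, y ≠ x ∧
        ((H v).neighborSet x = (H v).neighborSet y ∨
          insert x ((H v).neighborSet x) = insert y ((H v).neighborSet y))) ↔
      kMetricDim (corona G H) 2 = ∑ v, Fintype.card (W v) :=
  stmt_16_general hn G hG H
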